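/- Let v be a cut-vertex of a graph G, and let C₁, …, C_l be the subgraphs induced by v together with each of the l components of G − v (so each C_j contains its own copy of v). Then x^{l−1} · J(G) = Π_{j=1}^{l} J(C_j | v ∈ W) + x^{l−1} y Π_{j=1}^{l} J(C_j − v) + x^{l−1} (1−y) Π_{j=1}^{l} J(C_j | N_{C_j}[v] ∩ W = ∅). -/

import Mathlib

open Finset
open scoped Classical

/-- External neighbourhood N(W) = N[W] \ W of a vertex subset. -/
noncomputable def extN {V : Type} [Fintype V] (G : SimpleGraph V) (W : Finset V) : Finset V :=
  Finset.univ.filter (fun v => v ∉ W ∧ ∃ w ∈ W, G.Adj v w)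

/-- The bivariate domination polynomial J(G;x,y) = ∑_{W ⊆ V} x^|W| y^|N(W)|. -/
noncomputable def JP {V : Type} [Fintype V] (G : SimpleGraph V) (x y : ℝ) : ℝ :=
  ∑ W : Finset V, x ^ W.card * y ^ (extN G W).card

/-- Vertex deletion G − a. -/
noncomputable def Gdel {V : Type} (G : SimpleGraph V) (a : V) : SimpleGraph {v : V // v ≠ a} :=
  G.induce {v : V | v ≠ a}

/-- Deletion of a set of vertices. -/
noncomputable def GdelSet {V : Type} (G : SimpleGraph V) (S : Set V) : SimpleGraph {v : V // v ∉ S} :=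
  G.induce {v : V | v ∉ S}

/-- Vertex contraction G∖a: join all neighbours of a, then delete a. -/
noncomputable def Gcon {V : Type} (G : SimpleGraph V) (a : V) : SimpleGraph {v : V // v ≠ a} where
  Adj u v := u ≠ v ∧ (G.Adj u.val v.val ∨ (G.Adj u.val a ∧ G.Adj a v.val))
  symm := ⟨fun _ _ ⟨h1, h2⟩ =>
    ⟨fun e => h1 e.symm, h2.imp G.adj_symm (fun ⟨p, q⟩ => ⟨G.adj_symm q, G.adj_symm p⟩)⟩⟩
  loopless := ⟨fun _ h => h.1 rfl⟩

/-- The piece of `G` induced by a cut vertex `v` together with the connected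
component `c` of `G − v`. -/
noncomputable def Cpart {V : Type} [Fintype V] (G : SimpleGraph V) (v : V)
    (c : (Gdel G v).ConnectedComponent) :
    SimpleGraph {w : V // w = v ∨ ∃ h : w ≠ v, (Gdel G v).connectedComponentMk ⟨w, h⟩ = c} :=
  G.induce {w : V | w = v ∨ ∃ h : w ≠ v, (Gdel G v).connectedComponentMk ⟨w, h⟩ = c}

/-- The copy of the cut vertex `v` inside the piece `Cpart G v c`. -/
noncomputable def vcopy {V : Type} [Fintype V] (G : SimpleGraph V) (v : V)
    (c : (Gdel G v).ConnectedComponent) :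
    {w : V // w = v ∨ ∃ h : w ≠ v, (Gdel G v).connectedComponentMk ⟨w, h⟩ = c} :=
  ⟨v, Or.inl rfl⟩

/-!
Intersecting `W ⊆ V(G)` with the pieces `C_c` is a bijection onto the families `(W_c)` that
agree at `v`. Every edge of `G − v` lies inside a single piece, so `N_G(W) \ {v}` is the disjoint
union of the `N_{C_c}(W_c) \ {v}`, while `v ∈ W` is counted once in each of the `l` pieces. Hence
the three products are, up to `x ^ (l - 1)` in the first, the parts of `J(G)` over the sets
containing `v`, over the sets avoiding `v` (with `v` removed from their neighbourhood), and over
the sets avoiding `N[v]`. They recombine to `J(G)` because, for `v ∉ W`,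
`y ^ |N(W)| = y · y ^ |N(W) \ {v}| + (1 - y) · [W ∩ N(v) = ∅] · y ^ |N(W)|`.
-/

section Neighbourhood

variable {V : Type} [Fintype V] (G : SimpleGraph V)

lemma mem_extN {W : Finset V} {u : V} : u ∈ extN G W ↔ u ∉ W ∧ ∃ w ∈ W, G.Adj u w := by
  simp [extN]

lemma notMem_extN_of_mem {W : Finset V} {a : V} (h : a ∈ W) : a ∉ extN G W :=
  fun ha => ((mem_extN G).1 ha).1 h

lemma notMem_extN_of_forall_not_adj {W : Finset V} {a : V} (h : ∀ w ∈ W, ¬ G.Adj a w) :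
    a ∉ extN G W := by
  rw [mem_extN]
  rintro ⟨-, w, hw, haw⟩
  exact h w hw haw

lemma JP_eq_split (a : V) (x y : ℝ) :
    JP G x y = ∑ W ∈ univ.filter (fun W => a ∈ W), x ^ #W * y ^ #(extN G W)
      + y * ∑ W ∈ univ.filter (fun W => a ∉ W), x ^ #W * y ^ #((extN G W).erase a)
      + (1 - y) * ∑ W ∈ univ.filter (fun W => a ∉ W ∧ ∀ w ∈ W, ¬ G.Adj a w),
          x ^ #W * y ^ #(extN G W) := by
  have split_off_a : ∀ W : Finset V, a ∉ W →
      x ^ #W * y ^ #(extN G W)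
        = y * (x ^ #W * y ^ #((extN G W).erase a))
          + (1 - y) * if ∀ w ∈ W, ¬ G.Adj a w then x ^ #W * y ^ #(extN G W) else 0 := by
    intro W haW
    by_cases hadj : ∀ w ∈ W, ¬ G.Adj a w
    · rw [if_pos hadj, erase_eq_of_notMem (notMem_extN_of_forall_not_adj G hadj)]
      ring
    · obtain ⟨w, hw, haw⟩ : ∃ w ∈ W, G.Adj a w := by simpa using hadj
      have ha : a ∈ extN G W := (mem_extN G).2 ⟨haW, w, hw, haw⟩
      rw [if_neg hadj, ← card_erase_add_one ha, pow_succ]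
      ring
  rw [JP, ← sum_filter_add_sum_filter_not univ (fun W => a ∈ W),
    sum_congr rfl fun W hW => split_off_a W (mem_filter.1 hW).2, sum_add_distrib,
    ← mul_sum, ← mul_sum, ← sum_filter, filter_filter]
  ring

lemma extN_Gdel_map [DecidableEq V] (a : V) [Fintype {u // u ≠ a}] (W : Finset {u // u ≠ a}) :
    (extN (Gdel G a) W).map (Function.Embedding.subtype _)
      = (extN G (W.map (Function.Embedding.subtype _))).erase a := by
  ext u
  simp only [mem_map, mem_extN, mem_erase, Function.Embedding.coe_subtype]
  constructor
  · rintro ⟨u, ⟨huW, w, hw, huw⟩, rfl⟩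
    exact ⟨u.2, fun ⟨u', hu', h⟩ => huW (Subtype.ext h ▸ hu'), w, ⟨w, hw, rfl⟩, huw⟩
  · rintro ⟨hua, huW, _, ⟨w, hw, rfl⟩, huw⟩
    exact ⟨⟨u, hua⟩, ⟨fun hu => huW ⟨_, hu, rfl⟩, w, hw, huw⟩, rfl⟩

lemma JP_Gdel [DecidableEq V] (a : V) [Fintype {u // u ≠ a}] (x y : ℝ) :
    JP (Gdel G a) x y
      = ∑ W ∈ univ.filter (fun W => a ∉ W), x ^ #W * y ^ #((extN G W).erase a) := by
  refine sum_nbij' (fun W => W.map (Function.Embedding.subtype _)) (fun W => W.subtype (· ≠ a))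
    ?_ (fun _ _ => mem_univ _) ?_ ?_ ?_
  · intro W _
    simp
  · intro W _
    ext u
    simp [u.2]
  · intro W hW
    rw [subtype_map, filter_eq_self]
    exact fun w hw hwa => (mem_filter.1 hW).2 (hwa ▸ hw)
  · intro W _
    rw [← extN_Gdel_map, card_map, card_map]

end Neighbourhood

section Pieces

variable {V : Type} (G : SimpleGraph V) (v : V)

abbrev InPiece (c : (Gdel G v).ConnectedComponent) (w : V) : Prop :=
  w = v ∨ ∃ h : w ≠ v, (Gdel G v).connectedComponentMk ⟨w, h⟩ = c

lemma inPiece_iff_of_ne (c : (Gdel G v).ConnectedComponent) {w : V} (h : w ≠ v) :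
    InPiece G v c w ↔ (Gdel G v).connectedComponentMk ⟨w, h⟩ = c :=
  ⟨fun hw => (hw.resolve_left h).elim fun _ hc => hc, fun hc => Or.inr ⟨h, hc⟩⟩

variable [Fintype V]

lemma card_filter_inPiece (w : V) :
    #(univ.filter fun c => InPiece G v c w)
      = if w = v then Fintype.card (Gdel G v).ConnectedComponent else 1 := by
  split_ifs with h
  · rw [filter_true_of_mem fun c _ => Or.inl h, card_univ]
  · simp_rw [inPiece_iff_of_ne G v _ h]
    rw [filter_eq univ, if_pos (mem_univ _), card_singleton]

lemma sum_card_subtype_inPiece (W : Finset V) :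
    ∑ c, #(W.subtype (InPiece G v c))
      = ∑ w ∈ W, if w = v then Fintype.card (Gdel G v).ConnectedComponent else 1 := by
  simp_rw [card_subtype, card_filter]
  rw [sum_comm]
  simp_rw [← card_filter, card_filter_inPiece]

lemma sum_card_subtype_inPiece_of_notMem {W : Finset V} (hv : v ∉ W) :
    ∑ c, #(W.subtype (InPiece G v c)) = #W := by
  rw [sum_card_subtype_inPiece, sum_congr rfl fun w hw => if_neg (ne_of_mem_of_not_mem hw hv)]
  simp

lemma sum_card_subtype_inPiece_of_mem {W : Finset V} (hv : v ∈ W) :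
    ∑ c, #(W.subtype (InPiece G v c)) + 1
      = #W + Fintype.card (Gdel G v).ConnectedComponent := by
  rw [sum_card_subtype_inPiece, ← sum_erase_add _ _ hv, if_pos rfl,
    sum_congr rfl fun w hw => if_neg (ne_of_mem_erase hw)]
  simp only [sum_const, smul_eq_mul, mul_one, card_erase_of_mem hv]
  have : 1 ≤ #W := card_pos.2 ⟨v, hv⟩
  omega

lemma extN_Cpart_subtype_erase (c : (Gdel G v).ConnectedComponent) (W : Finset V) :
    (extN (Cpart G v c) (W.subtype (InPiece G v c))).erase (vcopy G v c)
      = ((extN G W).erase v).subtype (InPiece G v c) := by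
  ext u
  simp only [mem_erase, mem_extN, mem_subtype]
  constructor
  · rintro ⟨huv, huW, w, hw, huw⟩
    exact ⟨fun h => huv (Subtype.ext h), huW, w, hw, huw⟩
  · rintro ⟨huv, huW, w, hw, huw⟩
    refine ⟨fun h => huv (congrArg Subtype.val h), huW, ?_⟩
    by_cases hwv : w = v
    · exact ⟨⟨w, Or.inl hwv⟩, hw, huw⟩
    · have hc : (Gdel G v).connectedComponentMk ⟨w, hwv⟩ = c :=
        (SimpleGraph.ConnectedComponent.connectedComponentMk_eq_of_adj
          (G := Gdel G v) (v := ⟨u, huv⟩) (w := ⟨w, hwv⟩) huw).symm.trans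
          ((inPiece_iff_of_ne G v c huv).1 u.2)
      exact ⟨⟨w, Or.inr ⟨hwv, hc⟩⟩, hw, huw⟩

lemma sum_card_extN_Cpart_erase (W : Finset V) :
    ∑ c, #((extN (Cpart G v c) (W.subtype (InPiece G v c))).erase (vcopy G v c))
      = #((extN G W).erase v) := by
  simp_rw [extN_Cpart_subtype_erase]
  exact sum_card_subtype_inPiece_of_notMem G v (notMem_erase v _)

lemma sum_card_extN_Cpart {W : Finset V} (hv : v ∈ W ∨ ∀ w ∈ W, ¬ G.Adj v w) :
    ∑ c, #(extN (Cpart G v c) (W.subtype (InPiece G v c))) = #(extN G W) := by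
  have hvW : v ∉ extN G W :=
    hv.elim (notMem_extN_of_mem G) (notMem_extN_of_forall_not_adj G)
  have hvc (c : (Gdel G v).ConnectedComponent) :
      vcopy G v c ∉ extN (Cpart G v c) (W.subtype (InPiece G v c)) :=
    hv.elim (fun h => notMem_extN_of_mem _ (mem_subtype.2 h))
      (fun h => notMem_extN_of_forall_not_adj _ fun w hw => h w (mem_subtype.1 hw))
  rw [← erase_eq_of_notMem hvW, ← sum_card_extN_Cpart_erase]
  exact sum_congr rfl fun c _ => by rw [erase_eq_of_notMem (hvc c)]

end Pieces

section Gluing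

variable {V : Type} [Fintype V] (G : SimpleGraph V) (v : V)

noncomputable def gluePieces
    (p : ∀ c : (Gdel G v).ConnectedComponent, Finset {w // InPiece G v c w}) : Finset V :=
  univ.biUnion fun c => (p c).map (Function.Embedding.subtype _)

variable {G v} in
lemma mem_gluePieces {p : ∀ c : (Gdel G v).ConnectedComponent, Finset {w // InPiece G v c w}}
    {w : V} : w ∈ gluePieces G v p ↔ ∃ c, ∃ u ∈ p c, u.val = w := by
  simp [gluePieces]

lemma mem_gluePieces_self
    {p : ∀ c : (Gdel G v).ConnectedComponent, Finset {w // InPiece G v c w}} :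
    v ∈ gluePieces G v p ↔ ∃ c, vcopy G v c ∈ p c := by
  rw [mem_gluePieces]
  constructor
  · rintro ⟨c, u, hu, huv⟩
    exact ⟨c, (Subtype.ext huv : u = vcopy G v c) ▸ hu⟩
  · rintro ⟨c, hc⟩
    exact ⟨c, _, hc, rfl⟩

lemma gluePieces_subtype [Nonempty (Gdel G v).ConnectedComponent] (W : Finset V) :
    gluePieces G v (fun c => W.subtype (InPiece G v c)) = W := by
  ext w
  rw [mem_gluePieces]
  constructor
  · rintro ⟨c, u, hu, rfl⟩
    exact mem_subtype.1 hu
  · intro hw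
    by_cases hwv : w = v
    · exact ⟨Classical.arbitrary _, ⟨w, Or.inl hwv⟩, mem_subtype.2 hw, rfl⟩
    · exact ⟨_, ⟨w, Or.inr ⟨hwv, rfl⟩⟩, mem_subtype.2 hw, rfl⟩

/-- Distinct pieces meet only in the cut vertex, which is why agreement there suffices. -/
lemma subtype_gluePieces
    (p : ∀ c : (Gdel G v).ConnectedComponent, Finset {w // InPiece G v c w})
    (hp : (∀ c, vcopy G v c ∈ p c) ∨ ∀ c, vcopy G v c ∉ p c)
    (c : (Gdel G v).ConnectedComponent) :
    (gluePieces G v p).subtype (InPiece G v c) = p c := by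
  ext ⟨w, hw⟩
  rw [mem_subtype, mem_gluePieces]
  constructor
  · rintro ⟨c', ⟨w', hw'⟩, hu, rfl⟩
    by_cases hwv : w' = v
    · subst hwv
      rcases hp with h | h
      · exact h c
      · exact absurd hu (h c')
    · obtain rfl : c' = c :=
        ((inPiece_iff_of_ne G v c' hwv).1 hw').symm.trans ((inPiece_iff_of_ne G v c hwv).1 hw)
      exact hu
  · intro hu
    exact ⟨c, _, hu, rfl⟩

lemma sum_eq_prod_sum_subtype_inPiece {R : Type*} [CommSemiring R]
    [Nonempty (Gdel G v).ConnectedComponent]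
    (s : Finset (Finset V))
    (t : ∀ c : (Gdel G v).ConnectedComponent, Finset (Finset {w // InPiece G v c w}))
    (h_subtype : ∀ W ∈ s, ∀ c, W.subtype (InPiece G v c) ∈ t c)
    (h_glue : ∀ p : ∀ c, Finset {w // InPiece G v c w}, (∀ c, p c ∈ t c) →
      gluePieces G v p ∈ s)
    (h_agree : ∀ p : ∀ c, Finset {w // InPiece G v c w}, (∀ c, p c ∈ t c) →
      (∀ c, vcopy G v c ∈ p c) ∨ ∀ c, vcopy G v c ∉ p c)
    (f : Finset V → R) (g : ∀ c, Finset {w // InPiece G v c w} → R)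
    (hfg : ∀ W ∈ s, f W = ∏ c, g c (W.subtype (InPiece G v c))) :
    ∑ W ∈ s, f W = ∏ c, ∑ W ∈ t c, g c W := by
  rw [prod_univ_sum]
  refine sum_nbij' (fun W c => W.subtype (InPiece G v c)) (gluePieces G v) ?_ ?_ ?_ ?_ hfg
  · exact fun W hW => Fintype.mem_piFinset.2 (h_subtype W hW)
  · exact fun p hp => h_glue p (Fintype.mem_piFinset.1 hp)
  · exact fun W _ => gluePieces_subtype G v W
  · exact fun p hp => funext (subtype_gluePieces G v p (h_agree p (Fintype.mem_piFinset.1 hp)))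

end Gluing

section CutVertex

variable {V : Type} [Fintype V] (G : SimpleGraph V) (v : V)
  [Nonempty (Gdel G v).ConnectedComponent] (x y : ℝ)

lemma prod_sum_Cpart_vcopy_mem :
    ∏ c : (Gdel G v).ConnectedComponent,
        ∑ W ∈ univ.filter (fun W => vcopy G v c ∈ W), x ^ #W * y ^ #(extN (Cpart G v c) W)
      = x ^ (Fintype.card (Gdel G v).ConnectedComponent - 1) *
          ∑ W ∈ univ.filter (fun W => v ∈ W), x ^ #W * y ^ #(extN G W) := by
  rw [mul_sum]
  refine (sum_eq_prod_sum_subtype_inPiece G v _ _ ?_ ?_ ?_ _ _ ?_).symm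
  · exact fun W hW c => mem_filter.2 ⟨mem_univ _, mem_subtype.2 (mem_filter.1 hW).2⟩
  · intro p hp
    simpa [mem_gluePieces_self] using ⟨Classical.arbitrary _, (mem_filter.1 (hp _)).2⟩
  · exact fun p hp => Or.inl fun c => (mem_filter.1 (hp c)).2
  · intro W hW
    have hv : v ∈ W := (mem_filter.1 hW).2
    have hcard : ∑ c, #(W.subtype (InPiece G v c))
        = #W + (Fintype.card (Gdel G v).ConnectedComponent - 1) := by
      have := sum_card_subtype_inPiece_of_mem G v hv
      have : 1 ≤ Fintype.card (Gdel G v).ConnectedComponent := Fintype.card_pos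
      omega
    rw [prod_mul_distrib, prod_pow_eq_pow_sum, prod_pow_eq_pow_sum,
      sum_card_extN_Cpart G v (Or.inl hv), hcard, pow_add]
    ring

lemma prod_JP_Gdel_Cpart :
    ∏ c : (Gdel G v).ConnectedComponent, JP (Gdel (Cpart G v c) (vcopy G v c)) x y
      = ∑ W ∈ univ.filter (fun W => v ∉ W), x ^ #W * y ^ #((extN G W).erase v) := by
  rw [prod_congr rfl fun c _ => JP_Gdel (Cpart G v c) (vcopy G v c) x y]
  refine (sum_eq_prod_sum_subtype_inPiece G v _ _ ?_ ?_ ?_ _ _ ?_).symm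
  · exact fun W hW c =>
      mem_filter.2 ⟨mem_univ _, fun h => (mem_filter.1 hW).2 (mem_subtype.1 h)⟩
  · intro p hp
    simpa [mem_gluePieces_self] using fun c => (mem_filter.1 (hp c)).2
  · exact fun p hp => Or.inr fun c => (mem_filter.1 (hp c)).2
  · intro W hW
    rw [prod_mul_distrib, prod_pow_eq_pow_sum, prod_pow_eq_pow_sum,
      sum_card_subtype_inPiece_of_notMem G v (mem_filter.1 hW).2, sum_card_extN_Cpart_erase]

lemma prod_sum_Cpart_vcopy_not_adj :
    ∏ c : (Gdel G v).ConnectedComponent,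
        ∑ W ∈ univ.filter
            (fun W => vcopy G v c ∉ W ∧ ∀ w ∈ W, ¬ (Cpart G v c).Adj (vcopy G v c) w),
          x ^ #W * y ^ #(extN (Cpart G v c) W)
      = ∑ W ∈ univ.filter (fun W => v ∉ W ∧ ∀ w ∈ W, ¬ G.Adj v w),
          x ^ #W * y ^ #(extN G W) := by
  refine (sum_eq_prod_sum_subtype_inPiece G v _ _ ?_ ?_ ?_ _ _ ?_).symm
  · intro W hW c
    obtain ⟨hv, hadj⟩ := (mem_filter.1 hW).2
    exact mem_filter.2 ⟨mem_univ _, fun h => hv (mem_subtype.1 h),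
      fun u hu => hadj u (mem_subtype.1 hu)⟩
  · intro p hp
    refine mem_filter.2 ⟨mem_univ _, fun hv => ?_, fun w hw => ?_⟩
    · obtain ⟨c, hc⟩ := (mem_gluePieces_self G v).1 hv
      exact (mem_filter.1 (hp c)).2.1 hc
    · obtain ⟨c, u, hu, rfl⟩ := mem_gluePieces.1 hw
      exact (mem_filter.1 (hp c)).2.2 u hu
  · exact fun p hp => Or.inr fun c => (mem_filter.1 (hp c)).2.1
  · intro W hW
    obtain ⟨hv, hadj⟩ := (mem_filter.1 hW).2
    rw [prod_mul_distrib, prod_pow_eq_pow_sum, prod_pow_eq_pow_sum,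
      sum_card_subtype_inPiece_of_notMem G v hv, sum_card_extN_Cpart G v (Or.inr hadj)]

end CutVertex

theorem J_cut_vertex_general {V : Type} [Fintype V] (G : SimpleGraph V) (v : V)
    (hcut : 2 ≤ Fintype.card ((Gdel G v).ConnectedComponent)) (x y : ℝ) :
    x ^ (Fintype.card ((Gdel G v).ConnectedComponent) - 1) * JP G x y
      = (∏ c : (Gdel G v).ConnectedComponent,
          ∑ W ∈ Finset.univ.filter (fun W => vcopy G v c ∈ W),
            x ^ W.card * y ^ (extN (Cpart G v c) W).card)
        + x ^ (Fintype.card ((Gdel G v).ConnectedComponent) - 1) * y *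
            ∏ c : (Gdel G v).ConnectedComponent, JP (Gdel (Cpart G v c) (vcopy G v c)) x y
        + x ^ (Fintype.card ((Gdel G v).ConnectedComponent) - 1) * (1 - y) *
            ∏ c : (Gdel G v).ConnectedComponent,
              ∑ W ∈ Finset.univ.filter
                  (fun W => vcopy G v c ∉ W ∧ ∀ w ∈ W, ¬ (Cpart G v c).Adj (vcopy G v c) w),
                x ^ W.card * y ^ (extN (Cpart G v c) W).card := by
  have : Nonempty (Gdel G v).ConnectedComponent := Fintype.card_pos_iff.1 (by omega)
  rw [JP_eq_split G v, prod_sum_Cpart_vcopy_mem, prod_JP_Gdel_Cpart,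
    prod_sum_Cpart_vcopy_not_adj]
  ring

theorem J_cut_vertex {V : Type} [Fintype V] (G : SimpleGraph V) (v : V)
    (hconn : G.Connected)
    (hcut : 2 ≤ Fintype.card ((Gdel G v).ConnectedComponent)) (x y : ℝ) :
    x ^ (Fintype.card ((Gdel G v).ConnectedComponent) - 1) * JP G x y
      = (∏ c : (Gdel G v).ConnectedComponent,
          ∑ W ∈ Finset.univ.filter (fun W => vcopy G v c ∈ W),
            x ^ W.card * y ^ (extN (Cpart G v c) W).card)
        + x ^ (Fintype.card ((Gdel G v).ConnectedComponent) - 1) * y *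
            ∏ c : (Gdel G v).ConnectedComponent, JP (Gdel (Cpart G v c) (vcopy G v c)) x y
        + x ^ (Fintype.card ((Gdel G v).ConnectedComponent) - 1) * (1 - y) *
            ∏ c : (Gdel G v).ConnectedComponent,
              ∑ W ∈ Finset.univ.filter
                  (fun W => vcopy G v c ∉ W ∧ ∀ w ∈ W, ¬ (Cpart G v c).Adj (vcopy G v c) w),
                x ^ W.card * y ^ (extN (Cpart G v c) W).card :=
  J_cut_vertex_general G v hcut x y
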